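/- Explicit evaluation of the generalized exponential sampling series with B₂ kernel applied to F⁰_π(x) = ½ sinc²(½ log x): for w > 0 and 1 < x < e^{1/w}, (S_w^{B₂} F⁰_π)(x) = (2w²/π²){ (π²/(4w²))(1 − w log x) + sin²(π/(2w)) · w log x }. -/

import Mathlib

open Real

/-- `sinc u = sin(πu)/(πu)`, `sinc 0 = 1`. -/
noncomputable def sinc (u : ℝ) : ℝ :=
  if u = 0 then 1 else Real.sin (π * u) / (π * u)

/-- The second-order Mellin spline `B₂(x) = (1 - |log x|)₊`. -/
noncomputable def B2 (x : ℝ) : ℝ := max (1 - |Real.log x|) 0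

/-- The Mellin–Fejér kernel `F⁰_π(x) = ½ sinc²(½ log x)`. -/
noncomputable def Fpi (x : ℝ) : ℝ := 1 / 2 * _root_.sinc (Real.log x / 2) ^ 2

/-! The kernel `B₂(e^{-k} x^w) = (1 - |w log x - k|)₊` vanishes unless `|w log x - k| < 1`,
so for `0 ≤ w log x ≤ 1` only the samples `k = 0, 1` survive and the series is the linear
interpolation `F(1) (1 - w log x) + F(e^{1/w}) w log x`. For `F = F⁰_π` these samples are `1/2`
and `½ sinc²(1/(2w))`. -/

lemma B2_exp_neg_mul_rpow {x : ℝ} (hx : 0 < x) (w k : ℝ) :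
    B2 (Real.exp (-k) * x ^ w) = max (1 - |w * Real.log x - k|) 0 := by
  rw [B2, Real.log_mul (Real.exp_ne_zero _) (by positivity), Real.log_exp, Real.log_rpow hx,
    neg_add_eq_sub]

lemma one_le_abs_sub_intCast {t : ℝ} (ht0 : 0 ≤ t) (ht1 : t ≤ 1) {k : ℤ} (hk0 : k ≠ 0)
    (hk1 : k ≠ 1) : 1 ≤ |t - k| := by
  rcases (by omega : k ≤ -1 ∨ 2 ≤ k) with hk | hk
  · have : (k : ℝ) ≤ -1 := by exact_mod_cast hk
    exact le_abs.mpr (Or.inl (by linarith))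
  · have : (2 : ℝ) ≤ k := by exact_mod_cast hk
    exact le_abs.mpr (Or.inr (by linarith))

theorem tsum_mul_B2_exp_neg_mul_rpow (F : ℝ → ℝ) {w x : ℝ} (hx : 0 < x)
    (ht0 : 0 ≤ w * Real.log x) (ht1 : w * Real.log x ≤ 1) :
    ∑' k : ℤ, F (Real.exp (k / w)) * B2 (Real.exp (-k) * x ^ w) =
      F 1 * (1 - w * Real.log x) + F (Real.exp (1 / w)) * (w * Real.log x) := by
  have hvanish : ∀ k ∉ ({0, 1} : Finset ℤ),
      F (Real.exp (k / w)) * B2 (Real.exp (-k) * x ^ w) = 0 := by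
    intro k hk
    simp only [Finset.mem_insert, Finset.mem_singleton, not_or] at hk
    have hfar := one_le_abs_sub_intCast ht0 ht1 hk.1 hk.2
    rw [B2_exp_neg_mul_rpow hx, max_eq_right (by linarith), mul_zero]
  rw [tsum_eq_sum hvanish, Finset.sum_pair zero_ne_one, B2_exp_neg_mul_rpow hx,
    B2_exp_neg_mul_rpow hx]
  push_cast
  rw [zero_div, Real.exp_zero, sub_zero, abs_of_nonneg ht0, max_eq_left (by linarith),
    abs_of_nonpos (by linarith), max_eq_left (by linarith)]
  ring

lemma Fpi_one : Fpi 1 = 1 / 2 := by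
  norm_num [Fpi, _root_.sinc]

lemma Fpi_exp_one_div {w : ℝ} (hw : w ≠ 0) :
    Fpi (Real.exp (1 / w)) = 1 / 2 * (Real.sin (π / (2 * w)) / (π / (2 * w))) ^ 2 := by
  have harg : π * (1 / w / 2) = π / (2 * w) := by field_simp
  rw [Fpi, Real.log_exp, _root_.sinc, if_neg (by simpa using hw), harg]

/-- Explicit evaluation of the generalized exponential sampling series with kernel `B₂`
applied to `F⁰_π`, for `1 < x < e^{1/w}`. -/
theorem expSampling_B2_Fpi_explicit (w : ℝ) (hw : 0 < w) (x : ℝ)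
    (hx1 : 1 < x) (hx2 : x < Real.exp (1 / w)) :
    ∑' k : ℤ, Fpi (Real.exp (k / w)) * B2 (Real.exp (-k) * x ^ w) =
      2 * w ^ 2 / π ^ 2 *
        (π ^ 2 / (4 * w ^ 2) * (1 - w * Real.log x) +
          Real.sin (π / (2 * w)) ^ 2 * (w * Real.log x)) := by
  have hx0 : 0 < x := one_pos.trans hx1
  have ht0 : 0 ≤ w * Real.log x := mul_nonneg hw.le (Real.log_nonneg hx1.le)
  have ht1 : w * Real.log x ≤ 1 := by
    have := Real.log_lt_log hx0 hx2
    rw [Real.log_exp, lt_div_iff₀ hw] at this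
    linarith
  rw [tsum_mul_B2_exp_neg_mul_rpow Fpi hx0 ht0 ht1, Fpi_one, Fpi_exp_one_div hw.ne']
  field_simp
  ring
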